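/- Fix e ∈ [0,1) and suppose β₁ < β₂ in (0,1) are such that, for β ∈ [0,1], det(γ_{β,e}(2π) + I₂) = 0 holds exactly when β ∈ {β₁, β₂}. Then for every β ∈ (0, β₁) ∪ (β₂, 1), the complex eigenvalues of γ_{β,e}(2π) are a pair of non-real complex conjugate numbers of modulus 1 (equivalently, |tr γ_{β,e}(2π)| < 2), and γ_{β,e}(2π) is linearly stable: sup_{n∈ℕ} ‖γ_{β,e}(2π)ⁿ‖ < ∞. -/

import Mathlib

open Real Matrix

attribute [local instance] Matrix.normedAddCommGroup

noncomputable section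

/-- The standard symplectic matrix `J = [[0,-1],[1,0]]`. -/
def Jmat : Matrix (Fin 2) (Fin 2) ℝ := !![0, -1; 1, 0]

/-- The coefficient matrix `B_{β,e}(t) = diag(1, 1 - β/(1 + e cos t))`. -/
def Bmat (β e t : ℝ) : Matrix (Fin 2) (Fin 2) ℝ :=
  !![1, 0; 0, 1 - β / (1 + e * Real.cos t)]

/-- `γ` is the fundamental solution of `γ' = J B_{β,e} γ`, `γ(0) = I₂`
(derivative taken entrywise). -/
def IsFundSol (β e : ℝ) (γ : ℝ → Matrix (Fin 2) (Fin 2) ℝ) : Prop :=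
  γ 0 = 1 ∧ ∀ (t : ℝ) (i j : Fin 2),
    HasDerivAt (fun s => γ s i j) ((Jmat * Bmat β e t * γ t) i j) t

/-- The trace-formula function `f(β,-1)`. -/
def fTrace (β : ℝ) : ℝ :=
  β ^ 2 / (2 * (1 - β)) *
    ∫ s in (π / 2)..(3 * π / 2), ∫ t in (π / 2)..(3 * π / 2),
      Real.cos s * Real.cos t *
        (Real.cos (2 * π * Real.sqrt (1 - β) * (s - t)) ^ 2 /
            Real.cos (π * Real.sqrt (1 - β)) ^ 2 -
          Real.cos (4 * π * Real.sqrt (1 - β) * (s - t + 1 / 4)) /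
            Real.cos (π * Real.sqrt (1 - β)))

/-!
The trace `τ β` of the monodromy matrix `γ β (2π)`, which has determinant one (its columns have
constant Wronskian), depends continuously on `β` by Grönwall's inequality. It equals `2` at
`β = 0` and `β = 1`, where the equation has the periodic solutions `(cos t, sin t)` and
`(-e sin t, 1 + e cos t)`, and it is never `2` for `0 < β < 1`: a `2π`-periodic solution `x` of
`x'' + (1 - β / (1 + e cos t)) x = 0` has mean zero, hence two zeros in each period, whereas Sturm
comparison with `sin` puts consecutive zeros more than `π` apart. As `det (M + 1) = 2 + tr M`,
`τ = -2` exactly at `β₁, β₂`, so the intermediate value theorem gives `|τ| < 2` in Regions I and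
III. A matrix `M` with `det M = 1` and `tr M = 2 cos θ`, `sin θ ≠ 0`, has eigenvalues `e^{±iθ}`
and satisfies `sin θ • Mⁿ = sin (nθ) • M - sin ((n - 1)θ) • 1`, so its powers are bounded.
-/

open Set Filter Topology intervalIntegral

attribute [local instance] Matrix.normedSpace

theorem IsPreconnected.lt_of_forall_ne {s : Set ℝ} (hs : IsPreconnected s) {f : ℝ → ℝ}
    {a b c : ℝ} (hf : ContinuousOn f s) (hne : ∀ t ∈ s, f t ≠ c) (ha : a ∈ s) (hb : b ∈ s)
    (hfa : f a < c) : f b < c := by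
  by_contra! hfb
  obtain ⟨t, ht, hft⟩ := hs.intermediate_value ha hb hf ⟨hfa.le, hfb⟩
  exact hne t ht hft

theorem IsPreconnected.lt_of_forall_ne' {s : Set ℝ} (hs : IsPreconnected s) {f : ℝ → ℝ}
    {a b c : ℝ} (hf : ContinuousOn f s) (hne : ∀ t ∈ s, f t ≠ c) (ha : a ∈ s) (hb : b ∈ s)
    (hfa : c < f a) : c < f b :=
  neg_lt_neg_iff.1 <| hs.lt_of_forall_ne (f := fun t => -f t) hf.neg
    (fun t ht h => hne t ht (neg_injective h)) ha hb (neg_lt_neg hfa)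

theorem IsPreconnected.pos_or_neg_of_forall_ne_zero {s : Set ℝ} (hs : IsPreconnected s)
    {f : ℝ → ℝ} (hf : ContinuousOn f s) (hne : ∀ t ∈ s, f t ≠ 0) :
    (∀ t ∈ s, 0 < f t) ∨ (∀ t ∈ s, f t < 0) := by
  by_cases h : ∃ a ∈ s, f a < 0
  · obtain ⟨a, ha, hfa⟩ := h
    exact Or.inr fun t ht => hs.lt_of_forall_ne hf hne ha ht hfa
  · push Not at h
    exact Or.inl fun t ht => (h t ht).lt_of_ne' (hne t ht)

theorem exists_mem_Ioo_eq_zero_of_integral_eq_zero {x : ℝ → ℝ} (hx : Continuous x) {a b : ℝ}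
    (hab : a < b) (hint : ∫ t in a..b, x t = 0) : ∃ t ∈ Ioo a b, x t = 0 := by
  by_contra! hne
  rcases isPreconnected_Ioo.pos_or_neg_of_forall_ne_zero hx.continuousOn hne with hpos | hneg
  · exact (intervalIntegral_pos_of_pos_on (hx.intervalIntegrable a b) hpos hab).ne' hint
  · have := intervalIntegral_pos_of_pos_on (hx.neg.intervalIntegrable a b)
      (fun t ht => neg_pos.2 (hneg t ht)) hab
    rw [Pi.neg_def, intervalIntegral.integral_neg, hint, neg_zero] at this
    exact this.false

theorem HasDerivAt.nonpos_of_forall_Ioo_lt {f : ℝ → ℝ} {f' a b : ℝ} (hf : HasDerivAt f f' b)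
    (hab : a < b) (h : ∀ t ∈ Ioo a b, f b < f t) : f' ≤ 0 := by
  refine le_of_tendsto (hasDerivAt_iff_tendsto_slope_left_right.1 hf).1 ?_
  filter_upwards [Ioo_mem_nhdsLT hab] with t ht
  rw [slope_def_field]
  exact div_nonpos_of_nonneg_of_nonpos (sub_nonneg.2 (h t ht).le) (sub_nonpos.2 ht.2.le)

theorem exists_first_zero {x : ℝ → ℝ} (hx : Continuous x) {a b : ℝ} (hab : a < b)
    (hb : x b = 0) (hiso : ∀ᶠ t in 𝓝[>] a, x t ≠ 0) :
    ∃ c ∈ Ioc a b, x c = 0 ∧ ∀ t ∈ Ioo a c, x t ≠ 0 := by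
  obtain ⟨d, hd, hdiso⟩ := (mem_nhdsGT_iff_exists_mem_Ioc_Ioo_subset hab).1 hiso
  obtain ⟨c, ⟨⟨hdc, hcb⟩, hxc⟩, hleast⟩ :=
    (isCompact_Icc.inter_right (isClosed_singleton.preimage hx)).exists_isLeast
      ⟨b, ⟨hd.2, le_rfl⟩, hb⟩
  refine ⟨c, ⟨hd.1.trans_le hdc, hcb⟩, hxc, fun t ht hxt => ?_⟩
  rcases lt_or_ge t d with htd | hdt
  · exact hdiso ⟨ht.1, htd⟩ hxt
  · exact ht.2.not_ge (hleast ⟨⟨hdt, ht.2.le.trans hcb⟩, hxt⟩)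

theorem pi_lt_sub_of_pos_on_Ioo {q x p : ℝ → ℝ} (hq : Continuous q) (hq1 : ∀ t, q t < 1)
    (hx : ∀ t, HasDerivAt x (p t) t) (hp : ∀ t, HasDerivAt p (-(q t * x t)) t)
    {a b : ℝ} (hab : a < b) (hxa : x a = 0) (hxb : x b = 0) (hpos : ∀ t ∈ Ioo a b, 0 < x t) :
    π < b - a := by
  by_contra! hba
  have hxc : Continuous x := continuous_iff_continuousAt.2 fun t => (hx t).continuousAt
  -- the Wronskian of `x` and `sin (· - a)`, which solves the comparison equation `y'' + y = 0`
  set W : ℝ → ℝ := fun t => p t * Real.sin (t - a) - x t * Real.cos (t - a)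
  have hW : ∀ t, HasDerivAt W ((1 - q t) * x t * Real.sin (t - a)) t := by
    intro t
    have hsin := ((hasDerivAt_id' t).sub_const a).sin
    have hcos := ((hasDerivAt_id' t).sub_const a).cos
    exact (((hp t).mul hsin).sub ((hx t).mul hcos)).congr_deriv (by ring)
  have hW'c : Continuous fun t => (1 - q t) * x t * Real.sin (t - a) := by fun_prop
  have hW'pos : ∀ t ∈ Ioo a b, 0 < (1 - q t) * x t * Real.sin (t - a) := fun t ht =>
    mul_pos (mul_pos (sub_pos.2 (hq1 t)) (hpos t ht))
      (Real.sin_pos_of_pos_of_lt_pi (sub_pos.2 ht.1) (by linarith [ht.2]))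
  have hWab : 0 < W b - W a := by
    rw [← integral_eq_sub_of_hasDerivAt (fun t _ => hW t) (hW'c.intervalIntegrable _ _)]
    exact intervalIntegral_pos_of_pos_on (hW'c.intervalIntegrable _ _) hW'pos hab
  have hpb : p b ≤ 0 := (hx b).nonpos_of_forall_Ioo_lt hab fun t ht => hxb ▸ hpos t ht
  have hsin : 0 ≤ Real.sin (b - a) := Real.sin_nonneg_of_nonneg_of_le_pi (by linarith) hba
  have : W b - W a = p b * Real.sin (b - a) := by simp [W, hxa, hxb]
  nlinarith

theorem pi_lt_sub_of_zeros {q x p : ℝ → ℝ} (hq : Continuous q) (hq1 : ∀ t, q t < 1)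
    (hx : ∀ t, HasDerivAt x (p t) t) (hp : ∀ t, HasDerivAt p (-(q t * x t)) t)
    {a b : ℝ} (hab : a < b) (hxa : x a = 0) (hxb : x b = 0) (hpa : p a ≠ 0) : π < b - a := by
  have hxc : Continuous x := continuous_iff_continuousAt.2 fun t => (hx t).continuousAt
  have hiso : ∀ᶠ t in 𝓝[>] a, x t ≠ 0 := by
    have := ((hx a).eventually_ne hpa (c := x a)).filter_mono
      (nhdsWithin_mono a (s := Ioi a) fun t ht => ne_of_gt ht)
    simpa only [hxa] using this
  obtain ⟨c, ⟨hac, hcb⟩, hxc0, hne⟩ := exists_first_zero hxc hab hxb hiso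
  suffices π < c - a by linarith
  rcases isPreconnected_Ioo.pos_or_neg_of_forall_ne_zero hxc.continuousOn hne with hpos | hneg
  · exact pi_lt_sub_of_pos_on_Ioo hq hq1 hx hp hac hxa hxc0 hpos
  · refine pi_lt_sub_of_pos_on_Ioo (x := -x) (p := -p) hq hq1 (fun t => (hx t).neg)
      (fun t => ?_) hac (by simp [hxa]) (by simp [hxc0]) fun t ht => neg_pos.2 (hneg t ht)
    simpa using (hp t).neg

theorem hasDerivAt_mulVec {m n : Type*} [Fintype n] {A : ℝ → Matrix m n ℝ} {A' : Matrix m n ℝ}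
    {t : ℝ} (h : ∀ i j, HasDerivAt (fun s => A s i j) (A' i j) t) (v : n → ℝ) :
    HasDerivAt (fun s => A s *ᵥ v) (A' *ᵥ v) t :=
  hasDerivAt_pi.2 fun i => by
    simpa [mulVec, dotProduct] using HasDerivAt.fun_sum fun j _ => (h i j).mul_const (v j)

theorem Real.exists_cos_eq_and_sin_pos_of_abs_lt_one {a : ℝ} (ha : |a| < 1) :
    ∃ θ, Real.cos θ = a ∧ 0 < Real.sin θ := by
  obtain ⟨ha₁, ha₂⟩ := abs_lt.1 ha
  exact ⟨Real.arccos a, Real.cos_arccos ha₁.le ha₂.le,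
    Real.sin_pos_of_pos_of_lt_pi (Real.arccos_pos.2 ha₂) (Real.arccos_lt_pi.2 ha₁)⟩

namespace Matrix

theorem det_sub_one_fin_two {R : Type*} [CommRing R] (M : Matrix (Fin 2) (Fin 2) R) :
    (M - 1).det = M.det - M.trace + 1 := by
  simp [det_fin_two, trace_fin_two]; ring

theorem det_add_one_fin_two {R : Type*} [CommRing R] (M : Matrix (Fin 2) (Fin 2) R) :
    (M + 1).det = M.det + M.trace + 1 := by
  simp [det_fin_two, trace_fin_two]; ring

theorem trace_eq_two_iff_exists_mulVec_eq_self {K : Type*} [Field K]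
    {M : Matrix (Fin 2) (Fin 2) K} (hM : M.det = 1) :
    M.trace = 2 ↔ ∃ v ≠ 0, M *ᵥ v = v := by
  have hfix : ∀ v, M *ᵥ v = v ↔ (M - 1) *ᵥ v = 0 := fun v => by
    rw [sub_mulVec, one_mulVec, sub_eq_zero]
  simp_rw [hfix, exists_mulVec_eq_zero_iff, det_sub_one_fin_two, hM]
  constructor <;> intro h <;> linear_combination -h

theorem det_map_ofReal_sub_smul_one (M : Matrix (Fin 2) (Fin 2) ℝ) (z : ℂ) :
    (M.map (fun x => (x : ℂ)) - z • 1).det = z ^ 2 - M.trace * z + M.det := by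
  simp [det_fin_two, trace_fin_two]; ring

theorem mul_self_fin_two {R : Type*} [CommRing R] (M : Matrix (Fin 2) (Fin 2) R) :
    M * M = M.trace • M - M.det • 1 := by
  ext i j; fin_cases i <;> fin_cases j <;>
    simp [mul_apply, trace_fin_two, det_fin_two] <;> ring

theorem exists_eigenvalues_of_abs_trace_lt_two {M : Matrix (Fin 2) (Fin 2) ℝ}
    (hdet : M.det = 1) (htr : |M.trace| < 2) :
    ∃ μ : ℂ, μ.im ≠ 0 ∧ ‖μ‖ = 1 ∧
      ∀ z : ℂ, (M.map (fun x => (x : ℂ)) - z • 1).det = 0 ↔ z = μ ∨ z = starRingEnd ℂ μ := by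
  obtain ⟨θ, hcos, hsin⟩ := Real.exists_cos_eq_and_sin_pos_of_abs_lt_one (a := M.trace / 2)
    (by rw [abs_div, abs_two]; linarith)
  set μ := Complex.exp (θ * Complex.I)
  have hsum : μ + starRingEnd ℂ μ = M.trace := by
    rw [Complex.add_conj, Complex.exp_ofReal_mul_I_re, hcos]; push_cast; ring
  have hprod : μ * starRingEnd ℂ μ = 1 := by
    rw [Complex.mul_conj', Complex.norm_exp_ofReal_mul_I]; norm_num
  refine ⟨μ, by rw [Complex.exp_ofReal_mul_I_im]; exact hsin.ne',
    Complex.norm_exp_ofReal_mul_I θ, fun z => ?_⟩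
  have hfactor : z ^ 2 - M.trace * z + (1 : ℝ) = (z - μ) * (z - starRingEnd ℂ μ) := by
    push_cast; linear_combination z * hsum - hprod
  rw [det_map_ofReal_sub_smul_one, hdet, hfactor, mul_eq_zero, sub_eq_zero, sub_eq_zero]

theorem sin_smul_pow {M : Matrix (Fin 2) (Fin 2) ℝ} (hdet : M.det = 1) {θ : ℝ}
    (hcos : 2 * Real.cos θ = M.trace) (n : ℕ) :
    Real.sin θ • M ^ n = Real.sin (n * θ) • M - Real.sin ((n - 1) * θ) • 1 := by
  induction n with
  | zero => simp [neg_mul, Real.sin_neg]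
  | succ n ih =>
    have hsin : Real.sin ((n + 1) * θ) = M.trace * Real.sin (n * θ) - Real.sin ((n - 1) * θ) := by
      rw [← hcos, add_mul, sub_mul, one_mul, Real.sin_add, Real.sin_sub]; ring
    rw [pow_succ, ← smul_mul_assoc, ih, sub_mul, smul_mul_assoc, smul_mul_assoc, one_mul,
      mul_self_fin_two, hdet]
    push_cast
    rw [hsin, add_sub_cancel_right]
    module

theorem exists_norm_pow_le_of_abs_trace_lt_two {M : Matrix (Fin 2) (Fin 2) ℝ}
    (hdet : M.det = 1) (htr : |M.trace| < 2) : ∃ C : ℝ, ∀ n : ℕ, ‖M ^ n‖ ≤ C := by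
  obtain ⟨θ, hcos, hsin⟩ := Real.exists_cos_eq_and_sin_pos_of_abs_lt_one (a := M.trace / 2)
    (by rw [abs_div, abs_two]; linarith)
  refine ⟨(‖M‖ + ‖(1 : Matrix (Fin 2) (Fin 2) ℝ)‖) / Real.sin θ, fun n => ?_⟩
  rw [le_div_iff₀ hsin, mul_comm, ← abs_of_pos hsin, ← Real.norm_eq_abs, ← norm_smul,
    sin_smul_pow hdet (by linarith) n]
  refine (norm_sub_le _ _).trans (add_le_add ?_ ?_) <;> rw [norm_smul] <;>
    exact mul_le_of_le_one_left (norm_nonneg _) (by simpa using Real.abs_sin_le_one _)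

end Matrix

def hillCoeff (β e t : ℝ) : ℝ := 1 - β / (1 + e * Real.cos t)

/-- `y 1` is the position `x` and `y 0 = x'`: `y' = hillField β e t y` is Hill's equation
`x'' + hillCoeff β e t * x = 0`. -/
def hillField (β e t : ℝ) (y : Fin 2 → ℝ) : Fin 2 → ℝ := ![-(hillCoeff β e t * y 1), y 0]

def IsHillSolution (β e : ℝ) (g : ℝ → Fin 2 → ℝ) : Prop :=
  ∀ t, HasDerivAt g (hillField β e t (g t)) t

section HillEquation

variable {β e : ℝ}

theorem one_sub_abs_le_one_add_mul_cos (e t : ℝ) : 1 - |e| ≤ 1 + e * Real.cos t := by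
  have : |e * Real.cos t| ≤ |e| := by
    rw [abs_mul]; exact mul_le_of_le_one_right (abs_nonneg e) (Real.abs_cos_le_one t)
  linarith [neg_abs_le (e * Real.cos t)]

theorem one_add_mul_cos_pos (he : |e| < 1) (t : ℝ) : 0 < 1 + e * Real.cos t :=
  (sub_pos.2 he).trans_le (one_sub_abs_le_one_add_mul_cos e t)

theorem continuous_hillCoeff (he : |e| < 1) (β : ℝ) : Continuous (hillCoeff β e) :=
  continuous_const.sub <| continuous_const.div (by fun_prop) fun t => (one_add_mul_cos_pos he t).ne'

theorem hillCoeff_lt_one (he : |e| < 1) (hβ : 0 < β) (t : ℝ) : hillCoeff β e t < 1 :=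
  sub_lt_self 1 (div_pos hβ (one_add_mul_cos_pos he t))

theorem abs_hillCoeff_le (he : |e| < 1) (β t : ℝ) :
    |hillCoeff β e t| ≤ 1 + |β| / (1 - |e|) := by
  have hd := one_add_mul_cos_pos he t
  calc |hillCoeff β e t| ≤ |1| + |β / (1 + e * Real.cos t)| := abs_sub _ _
    _ ≤ 1 + |β| / (1 - |e|) := by
      rw [abs_one, abs_div, abs_of_pos hd]
      gcongr
      exact one_sub_abs_le_one_add_mul_cos e t

theorem abs_hillCoeff_sub_le (he : |e| < 1) (β β' t : ℝ) :
    |hillCoeff β e t - hillCoeff β' e t| ≤ |β - β'| / (1 - |e|) := by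
  have hd := one_add_mul_cos_pos he t
  rw [show hillCoeff β e t - hillCoeff β' e t = (β' - β) / (1 + e * Real.cos t) by
    simp only [hillCoeff]; ring, abs_div, abs_of_pos hd, abs_sub_comm]
  gcongr
  exact one_sub_abs_le_one_add_mul_cos e t

theorem hillField_sub (β e t : ℝ) (y z : Fin 2 → ℝ) :
    hillField β e t y - hillField β e t z = hillField β e t (y - z) := by
  ext i; fin_cases i <;> simp [hillField]; ring

theorem hillField_zero (β e t : ℝ) : hillField β e t 0 = 0 := by
  ext i; fin_cases i <;> simp [hillField]

theorem hillField_add_two_pi (β e t : ℝ) : hillField β e (t + 2 * π) = hillField β e t := by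
  funext y; simp [hillField, hillCoeff, Real.cos_add_two_pi]

theorem norm_hillField_le (he : |e| < 1) (β t : ℝ) (y : Fin 2 → ℝ) :
    ‖hillField β e t y‖ ≤ (1 + |β| / (1 - |e|)) * ‖y‖ := by
  have hK : 1 ≤ 1 + |β| / (1 - |e|) := le_add_of_nonneg_right (by have := sub_pos.2 he; positivity)
  refine (pi_norm_le_iff_of_nonneg (by positivity)).2 fun i => ?_
  fin_cases i
  · simpa [hillField, norm_mul] using
      mul_le_mul (abs_hillCoeff_le he β t) (norm_le_pi_norm y 1) (norm_nonneg _) (by positivity)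
  · simpa [hillField] using
      (norm_le_pi_norm y 0).trans (le_mul_of_one_le_left (norm_nonneg y) hK)

theorem lipschitzWith_hillField (he : |e| < 1) (β t : ℝ) :
    LipschitzWith (1 + |β| / (1 - |e|)).toNNReal (hillField β e t) :=
  LipschitzWith.of_dist_le' fun y z => by
    simpa only [dist_eq_norm, hillField_sub] using norm_hillField_le he β t (y - z)

theorem dist_hillField_le (he : |e| < 1) (β β' t : ℝ) (y : Fin 2 → ℝ) :
    dist (hillField β' e t y) (hillField β e t y) ≤ |β - β'| / (1 - |e|) * ‖y‖ := by
  refine (dist_pi_le_iff (by have := sub_pos.2 he; positivity)).2 (Fin.forall_fin_two.2 ⟨?_, ?_⟩)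
  · rw [Real.dist_eq, show hillField β' e t y 0 - hillField β e t y 0 =
      (hillCoeff β e t - hillCoeff β' e t) * y 1 by simp [hillField]; ring, abs_mul]
    exact mul_le_mul (abs_hillCoeff_sub_le he β β' t) (norm_le_pi_norm y 1) (abs_nonneg _)
      (by have := sub_pos.2 he; positivity)
  · simp [hillField]
    positivity

end HillEquation

namespace IsHillSolution

variable {β β' e : ℝ} {f g : ℝ → Fin 2 → ℝ}

theorem continuous (hg : IsHillSolution β e g) : Continuous g :=
  continuous_iff_continuousAt.2 fun t => (hg t).continuousAt

theorem hasDerivAt_one (hg : IsHillSolution β e g) (t : ℝ) :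
    HasDerivAt (fun s => g s 1) (g t 0) t := by
  simpa [hillField] using hasDerivAt_pi.1 (hg t) 1

theorem hasDerivAt_zero (hg : IsHillSolution β e g) (t : ℝ) :
    HasDerivAt (fun s => g s 0) (-(hillCoeff β e t * g t 1)) t := by
  simpa [hillField] using hasDerivAt_pi.1 (hg t) 0

theorem eq_of_apply_eq (he : |e| < 1) (hf : IsHillSolution β e f) (hg : IsHillSolution β e g)
    {t₀ : ℝ} (h : f t₀ = g t₀) : f = g :=
  ODE_solution_unique_univ (s := fun _ => univ)
    (fun t => (lipschitzWith_hillField he β t).lipschitzOnWith) (fun t => ⟨hf t, trivial⟩)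
    (fun t => ⟨hg t, trivial⟩) h

theorem eq_zero_of_apply_eq_zero (he : |e| < 1) (hg : IsHillSolution β e g) {t₀ : ℝ}
    (h : g t₀ = 0) : g = 0 :=
  hg.eq_of_apply_eq he (fun t => by
    rw [Pi.zero_apply, hillField_zero]; exact hasDerivAt_const t 0) h

theorem periodic (he : |e| < 1) (hg : IsHillSolution β e g) (h : g (2 * π) = g 0) :
    Function.Periodic g (2 * π) := by
  have hshift : IsHillSolution β e fun t => g (t + 2 * π) := fun t => by
    simpa [hillField_add_two_pi] using (hg (t + 2 * π)).comp_add_const t (2 * π)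
  exact congrFun (hshift.eq_of_apply_eq he hg (t₀ := 0) (by simpa using h))

theorem wronskian_eq (hf : IsHillSolution β e f) (hg : IsHillSolution β e g) (t : ℝ) :
    f t 0 * g t 1 - f t 1 * g t 0 = f 0 0 * g 0 1 - f 0 1 * g 0 0 := by
  have hW : ∀ s, HasDerivAt (fun s => f s 0 * g s 1 - f s 1 * g s 0) 0 s := fun s =>
    (((hf.hasDerivAt_zero s).mul (hg.hasDerivAt_one s)).sub
      ((hf.hasDerivAt_one s).mul (hg.hasDerivAt_zero s))).congr_deriv (by ring)
  exact is_const_of_deriv_eq_zero (fun s => (hW s).differentiableAt) (fun s => (hW s).deriv) t 0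

theorem norm_le (he : |e| < 1) (hg : IsHillSolution β e g) {t : ℝ} (ht : 0 ≤ t) :
    ‖g t‖ ≤ ‖g 0‖ * Real.exp ((1 + |β| / (1 - |e|)) * t) := by
  simpa [gronwallBound_ε0] using norm_le_gronwallBound_of_norm_deriv_right_le (ε := 0)
    hg.continuous.continuousOn (fun s _ => (hg s).hasDerivWithinAt) le_rfl
    (fun s _ => by simpa using norm_hillField_le he β s (g s)) t ⟨ht, le_rfl⟩

theorem dist_le_gronwallBound (he : |e| < 1) (hf : IsHillSolution β e f)
    (hg : IsHillSolution β' e g) (h0 : f 0 = g 0) {T : ℝ} (hT : 0 ≤ T) :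
    dist (f T) (g T) ≤ gronwallBound 0 (1 + |β| / (1 - |e|)).toNNReal
      (|β - β'| / (1 - |e|) * (‖g 0‖ * Real.exp ((1 + |β'| / (1 - |e|)) * T))) T := by
  have he' := sub_pos.2 he
  have := dist_le_of_approx_trajectories_ODE
    (εg := |β - β'| / (1 - |e|) * (‖g 0‖ * Real.exp ((1 + |β'| / (1 - |e|)) * T)))
    (lipschitzWith_hillField he β)
    hf.continuous.continuousOn (fun t _ => (hf t).hasDerivWithinAt)
    (fun t _ => (dist_self _).le) hg.continuous.continuousOn
    (fun t _ => (hg t).hasDerivWithinAt) (fun t ht => ?_) (by rw [h0, dist_self]) T ⟨hT, le_rfl⟩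
  · simpa using this
  · refine (dist_hillField_le he β β' t (g t)).trans ?_
    gcongr
    exact (hg.norm_le he ht.1).trans (by gcongr; exact ht.2.le)

theorem integral_eq_zero (he : |e| < 1) (hβ : β ≠ 1) (hg : IsHillSolution β e g)
    (hper : Function.Periodic g (2 * π)) (a : ℝ) : ∫ t in a..a + 2 * π, g t 1 = 0 := by
  -- the Wronskian of `g · 1` with `1 + e cos t`, which solves the equation for `β = 1`
  set G : ℝ → ℝ := fun t => g t 0 * (1 + e * Real.cos t) + g t 1 * (e * Real.sin t)
  have hG : ∀ t, HasDerivAt G ((β - 1) * g t 1) t := fun t => by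
    have hd := (one_add_mul_cos_pos he t).ne'
    refine (((hg.hasDerivAt_zero t).mul (((Real.hasDerivAt_cos t).const_mul e).const_add 1)).add
      ((hg.hasDerivAt_one t).mul ((Real.hasDerivAt_sin t).const_mul e))).congr_deriv ?_
    simp only [hillCoeff]
    field_simp
    ring
  have hGper : G (a + 2 * π) = G a := by simp [G, hper a]
  have hint := integral_eq_sub_of_hasDerivAt (fun t _ => hG t)
    ((continuous_const.mul ((continuous_apply 1).comp hg.continuous)).intervalIntegrable a
      (a + 2 * π))
  rw [hGper, sub_self, intervalIntegral.integral_const_mul] at hint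
  exact (mul_eq_zero.1 hint).resolve_left (sub_ne_zero.2 hβ)

theorem eq_zero_of_apply_two_pi_eq (he : |e| < 1) (hβ : β ∈ Ioo 0 1)
    (hg : IsHillSolution β e g) (hper : g (2 * π) = g 0) : g = 0 := by
  by_contra hg0
  have hsimple : ∀ t, g t 1 = 0 → g t 0 ≠ 0 := fun t hx hp =>
    hg0 (hg.eq_zero_of_apply_eq_zero he (t₀ := t) (by ext i; fin_cases i <;> assumption))
  have hzeros : ∀ {a b}, a < b → g a 1 = 0 → g b 1 = 0 → π < b - a := fun hab hxa hxb =>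
    pi_lt_sub_of_zeros (continuous_hillCoeff he β) (hillCoeff_lt_one he hβ.1) hg.hasDerivAt_one
      hg.hasDerivAt_zero hab hxa hxb (hsimple _ hxa)
  have hper := hg.periodic he hper
  have hint := hg.integral_eq_zero he hβ.2.ne hper
  have hxc : Continuous fun t => g t 1 := (continuous_apply 1).comp hg.continuous
  obtain ⟨t₀, -, hx₀⟩ :=
    exists_mem_Ioo_eq_zero_of_integral_eq_zero hxc Real.two_pi_pos (by simpa using hint 0)
  obtain ⟨t₁, ⟨h₀₁, h₁₂⟩, hx₁⟩ :=
    exists_mem_Ioo_eq_zero_of_integral_eq_zero hxc (by linarith [Real.pi_pos]) (hint t₀)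
  have hx₂ : g (t₀ + 2 * π) 1 = 0 := by rw [hper t₀, hx₀]
  linarith [hzeros h₀₁ hx₀ hx₁, hzeros h₁₂ hx₁ hx₂]

end IsHillSolution

theorem isHillSolution_zero_cos_sin (e : ℝ) :
    IsHillSolution 0 e fun t => ![Real.cos t, Real.sin t] := fun t => by
  refine hasDerivAt_pi.2 (Fin.forall_fin_two.2 ⟨?_, ?_⟩)
  · simpa [hillField, hillCoeff] using Real.hasDerivAt_cos t
  · simpa [hillField] using Real.hasDerivAt_sin t

theorem isHillSolution_one_sin_cos {e : ℝ} (he : |e| < 1) :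
    IsHillSolution 1 e fun t => ![-(e * Real.sin t), 1 + e * Real.cos t] := fun t => by
  refine hasDerivAt_pi.2 (Fin.forall_fin_two.2 ⟨?_, ?_⟩)
  · have hd := (one_add_mul_cos_pos he t).ne'
    refine ((Real.hasDerivAt_sin t).const_mul e).neg.congr_deriv ?_
    simp only [hillField, hillCoeff, Matrix.cons_val_zero, Matrix.cons_val_one]
    field_simp
    ring
  · simpa [hillField] using ((Real.hasDerivAt_cos t).const_mul e).const_add 1

theorem Jmat_mul_Bmat_mulVec (β e t : ℝ) (y : Fin 2 → ℝ) :
    (Jmat * Bmat β e t) *ᵥ y = hillField β e t y := by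
  ext i; fin_cases i
  · simp [Jmat, Bmat, hillField, hillCoeff, mulVec, dotProduct]; ring
  · simp [Jmat, Bmat, hillField, mulVec, dotProduct]

namespace IsFundSol

variable {β e : ℝ} {γ : ℝ → Matrix (Fin 2) (Fin 2) ℝ}

theorem isHillSolution_mulVec (h : IsFundSol β e γ) (v : Fin 2 → ℝ) :
    IsHillSolution β e fun t => γ t *ᵥ v := fun t => by
  have := hasDerivAt_mulVec (h.2 t) v
  rwa [← mulVec_mulVec, Jmat_mul_Bmat_mulVec] at this

theorem mulVec_apply_zero (he : |e| < 1) (h : IsFundSol β e γ) {g : ℝ → Fin 2 → ℝ}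
    (hg : IsHillSolution β e g) (t : ℝ) : γ t *ᵥ g 0 = g t :=
  congrFun ((h.isHillSolution_mulVec (g 0)).eq_of_apply_eq he hg (t₀ := 0) (by simp [h.1])) t

theorem det_eq_one (h : IsFundSol β e γ) (t : ℝ) : (γ t).det = 1 := by
  have := (h.isHillSolution_mulVec ![1, 0]).wronskian_eq (h.isHillSolution_mulVec ![0, 1]) t
  simp [h.1, mulVec, dotProduct] at this
  rw [det_fin_two]; linarith

theorem trace_eq_two_iff (he : |e| < 1) (h : IsFundSol β e γ) :
    (γ (2 * π)).trace = 2 ↔ ∃ g, IsHillSolution β e g ∧ g 0 ≠ 0 ∧ g (2 * π) = g 0 := by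
  rw [trace_eq_two_iff_exists_mulVec_eq_self (h.det_eq_one _)]
  constructor
  · rintro ⟨v, hv, hMv⟩
    exact ⟨_, h.isHillSolution_mulVec v, by simpa [h.1] using hv, by simpa [h.1] using hMv⟩
  · rintro ⟨g, hg, hg0, hper⟩
    exact ⟨g 0, hg0, by rw [h.mulVec_apply_zero he hg, hper]⟩

theorem trace_ne_two (he : |e| < 1) (hβ : β ∈ Ioo 0 1) (h : IsFundSol β e γ) :
    (γ (2 * π)).trace ≠ 2 := by
  rw [Ne, h.trace_eq_two_iff he]
  rintro ⟨g, hg, hg0, hper⟩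
  exact hg0 (by rw [hg.eq_zero_of_apply_two_pi_eq he hβ hper, Pi.zero_apply])

theorem trace_of_beta_zero (he : |e| < 1) (h : IsFundSol 0 e γ) : (γ (2 * π)).trace = 2 :=
  (h.trace_eq_two_iff he).2 ⟨_, isHillSolution_zero_cos_sin e, by simp, by simp⟩

theorem trace_of_beta_one (he : |e| < 1) (h : IsFundSol 1 e γ) : (γ (2 * π)).trace = 2 := by
  refine (h.trace_eq_two_iff he).2 ⟨_, isHillSolution_one_sin_cos he, ?_, by simp⟩
  have : 0 < 1 + e := by linarith [neg_abs_le e]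
  simpa using this.ne'

end IsFundSol

theorem continuousOn_fundSol_mulVec {e : ℝ} (he : |e| < 1) {γ : ℝ → ℝ → Matrix (Fin 2) (Fin 2) ℝ}
    {s : Set ℝ} (hγ : ∀ β ∈ s, IsFundSol β e (γ β)) {T : ℝ} (hT : 0 ≤ T) (v : Fin 2 → ℝ) :
    ContinuousOn (fun β => γ β T *ᵥ v) s := by
  intro β₀ hβ₀
  set K := (1 + |β₀| / (1 - |e|)).toNNReal
  set ε : ℝ → ℝ := fun β => |β₀ - β| / (1 - |e|) * (‖v‖ * Real.exp ((1 + |β| / (1 - |e|)) * T))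
  have hε : Tendsto (fun β => gronwallBound 0 K (ε β) T) (𝓝[s] β₀) (𝓝 0) := by
    have : Continuous fun β => gronwallBound 0 K (ε β) T :=
      (gronwallBound_continuous_ε 0 K T).comp (by fun_prop)
    have h0 : gronwallBound 0 K (ε β₀) T = 0 := by simp [ε, gronwallBound_ε0_δ0]
    simpa only [h0] using (this.tendsto β₀).mono_left nhdsWithin_le_nhds
  refine tendsto_iff_dist_tendsto_zero.2 <|
    squeeze_zero' (Eventually.of_forall fun _ => dist_nonneg) ?_ hε
  filter_upwards [self_mem_nhdsWithin] with β hβ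
  have := ((hγ β₀ hβ₀).isHillSolution_mulVec v).dist_le_gronwallBound he
    ((hγ β hβ).isHillSolution_mulVec v) (by simp [(hγ β₀ hβ₀).1, (hγ β hβ).1]) hT
  rwa [(hγ β hβ).1, one_mulVec, dist_comm] at this

theorem continuousOn_trace_fundSol {e : ℝ} (he : |e| < 1)
    {γ : ℝ → ℝ → Matrix (Fin 2) (Fin 2) ℝ} {s : Set ℝ} (hγ : ∀ β ∈ s, IsFundSol β e (γ β))
    {T : ℝ} (hT : 0 ≤ T) : ContinuousOn (fun β => (γ β T).trace) s := by
  have hcol := fun v i =>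
    (continuous_apply i).comp_continuousOn (continuousOn_fundSol_mulVec he hγ hT v)
  refine ((hcol ![1, 0] 0).add (hcol ![0, 1] 1)).congr fun β _ => ?_
  simp [trace_fin_two]

theorem abs_lt_two_of_mem_regions {f : ℝ → ℝ} {β₁ β₂ β : ℝ} (hf : ContinuousOn f (Icc 0 1))
    (h₀ : f 0 = 2) (h₁ : f 1 = 2) (hne : ∀ b ∈ Ioo (0 : ℝ) 1, f b ≠ 2)
    (hdeg : ∀ b ∈ Icc (0 : ℝ) 1, f b = -2 ↔ b = β₁ ∨ b = β₂) (hβ₁ : β₁ ∈ Ioo (0 : ℝ) 1)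
    (hlt : β₁ < β₂) (hβ : β ∈ Ioo 0 β₁ ∪ Ioo β₂ 1) : |f β| < 2 := by
  have hβ01 : β ∈ Ioo (0 : ℝ) 1 := by
    rcases hβ with hβ | hβ <;> constructor <;> linarith [hβ.1, hβ.2, hβ₁.1, hβ₁.2]
  have hne' : ∀ b ∈ Icc (0 : ℝ) 1, b ≠ β₁ → b ≠ β₂ → f b ≠ -2 := fun b hb h₁ h₂ h =>
    ((hdeg b hb).1 h).elim h₁ h₂
  refine abs_lt.2 ⟨?_, isPreconnected_Ioo.lt_of_forall_ne (hf.mono Ioo_subset_Icc_self) hne hβ₁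
    hβ01 (by rw [(hdeg β₁ (Ioo_subset_Icc_self hβ₁)).2 (Or.inl rfl)]; norm_num)⟩
  rcases hβ with hβ | hβ
  · refine isPreconnected_Icc.lt_of_forall_ne' (hf.mono (Icc_subset_Icc_right hβ01.2.le))
      (fun b hb => hne' b ⟨hb.1, hb.2.trans hβ01.2.le⟩ (hb.2.trans_lt hβ.2).ne
        (hb.2.trans_lt (hβ.2.trans hlt)).ne)
      (left_mem_Icc.2 hβ01.1.le) (right_mem_Icc.2 hβ01.1.le) (by rw [h₀]; norm_num)
  · refine isPreconnected_Icc.lt_of_forall_ne' (hf.mono (Icc_subset_Icc_left hβ01.1.le))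
      (fun b hb => hne' b ⟨hβ01.1.le.trans hb.1, hb.2⟩ ((hlt.trans hβ.1).trans_le hb.1).ne'
        (hβ.1.trans_le hb.1).ne')
      (right_mem_Icc.2 hβ01.2.le) (left_mem_Icc.2 hβ01.2.le) (by rw [h₁]; norm_num)

theorem stmt_15_general (e : ℝ) (he : e ∈ Set.Ico (0 : ℝ) 1)
    (β₁ β₂ : ℝ) (hβ₁ : β₁ ∈ Set.Ioo (0 : ℝ) 1)
    (hlt : β₁ < β₂)
    (γ : ℝ → ℝ → Matrix (Fin 2) (Fin 2) ℝ)
    (hγ : ∀ β ∈ Set.Icc (0 : ℝ) 1, IsFundSol β e (γ β))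
    (hdeg : ∀ β ∈ Set.Icc (0 : ℝ) 1,
      (Matrix.det (γ β (2 * π) + 1) = 0 ↔ β = β₁ ∨ β = β₂)) :
    ∀ β ∈ Set.Ioo (0 : ℝ) β₁ ∪ Set.Ioo β₂ 1,
      (∃ μ : ℂ, μ.im ≠ 0 ∧ ‖μ‖ = 1 ∧
        ∀ z : ℂ, Matrix.det ((γ β (2 * π)).map (fun x => (x : ℂ)) - z • 1) = 0 ↔
          z = μ ∨ z = (starRingEnd ℂ) μ) ∧
      |Matrix.trace (γ β (2 * π))| < 2 ∧
      ∃ C : ℝ, ∀ n : ℕ, ‖γ β (2 * π) ^ n‖ ≤ C := by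
  intro β hβ
  have he' : |e| < 1 := abs_lt.2 ⟨by linarith [he.1], he.2⟩
  have hdet : ∀ b ∈ Icc (0 : ℝ) 1, (γ b (2 * π)).det = 1 := fun b hb => (hγ b hb).det_eq_one _
  have htr : |(γ β (2 * π)).trace| < 2 := by
    refine abs_lt_two_of_mem_regions (f := fun b => (γ b (2 * π)).trace)
      (continuousOn_trace_fundSol he' hγ Real.two_pi_pos.le)
      ((hγ 0 (left_mem_Icc.2 zero_le_one)).trace_of_beta_zero he')
      ((hγ 1 (right_mem_Icc.2 zero_le_one)).trace_of_beta_one he')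
      (fun b hb => (hγ b (Ioo_subset_Icc_self hb)).trace_ne_two he' hb)
      (fun b hb => ?_) hβ₁ hlt hβ
    rw [← hdeg b hb, det_add_one_fin_two, hdet b hb]
    constructor <;> intro h <;> linarith
  have hβdet : (γ β (2 * π)).det = 1 := hdet β <| by
    rcases hβ with hβ | hβ <;> constructor <;> linarith [hβ.1, hβ.2, hβ₁.1, hβ₁.2]
  exact ⟨exists_eigenvalues_of_abs_trace_lt_two hβdet htr, htr,
    exists_norm_pow_le_of_abs_trace_lt_two hβdet htr⟩

/-- in Regions I and III (i.e. `β ∈ (0,β₁) ∪ (β₂,1)` where `β₁ < β₂` are the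
two `-1`-degenerate values), the eigenvalues of the monodromy matrix are a non-real complex
conjugate pair on the unit circle, `|trace| < 2`, and the matrix is linearly stable. -/
theorem stmt_15 (e : ℝ) (he : e ∈ Set.Ico (0 : ℝ) 1)
    (β₁ β₂ : ℝ) (hβ₁ : β₁ ∈ Set.Ioo (0 : ℝ) 1) (hβ₂ : β₂ ∈ Set.Ioo (0 : ℝ) 1)
    (hlt : β₁ < β₂)
    (γ : ℝ → ℝ → Matrix (Fin 2) (Fin 2) ℝ)
    (hγ : ∀ β ∈ Set.Icc (0 : ℝ) 1, IsFundSol β e (γ β))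
    (hdeg : ∀ β ∈ Set.Icc (0 : ℝ) 1,
      (Matrix.det (γ β (2 * π) + 1) = 0 ↔ β = β₁ ∨ β = β₂)) :
    ∀ β ∈ Set.Ioo (0 : ℝ) β₁ ∪ Set.Ioo β₂ 1,
      (∃ μ : ℂ, μ.im ≠ 0 ∧ ‖μ‖ = 1 ∧
        ∀ z : ℂ, Matrix.det ((γ β (2 * π)).map (fun x => (x : ℂ)) - z • 1) = 0 ↔
          z = μ ∨ z = (starRingEnd ℂ) μ) ∧
      |Matrix.trace (γ β (2 * π))| < 2 ∧
      ∃ C : ℝ, ∀ n : ℕ, ‖γ β (2 * π) ^ n‖ ≤ C :=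
  stmt_15_general e he β₁ β₂ hβ₁ hlt γ hγ hdeg
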